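/- (Caccioppoli-type consequence) Let u ∈ C²(Ω) be bounded on an open set Ω ⊆ ℝ^{n+1} and satisfy |u Δu| ≤ θ|∇u|² with 0 < θ < 1. Then for every ball B(z, r) with B(z, 2r) ⊆ Ω, one has ∫_{B(z,r)} |∇u|² ≤ C(n, θ) r^{n−1} ‖u‖_∞², equivalently the mean value of |∇u|² over B(z,r) is at most C(n,θ)‖u‖_∞²/r². -/

import Mathlib

open MeasureTheory Metric Set

/-- The Euclidean Laplacian: sum of second partial derivatives. -/
noncomputable def lap {m : ℕ} (u : EuclideanSpace ℝ (Fin m) → ℝ)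
    (x : EuclideanSpace ℝ (Fin m)) : ℝ :=
  ∑ i : Fin m, fderiv ℝ (fun y => fderiv ℝ u y (EuclideanSpace.single i 1)) x
    (EuclideanSpace.single i 1)

/-!
Testing `Δ(u²)/2 = |∇u|² + u Δu` against `η²` for a cutoff `η` and integrating by parts gives
`∫ η² (|∇u|² + u Δu) = -∫ 2 η u ∇η·∇u`. Since `u Δu ≥ -θ |∇u|²` and, by Young's inequality,
`2 |η u ∇η·∇u| ≤ (1-θ)/2 η² |∇u|² + 2/(1-θ) M² |∇η|²`, this yields
`∫ η² |∇u|² ≤ 4 M² / (1-θ)² ∫ |∇η|²`. For `η` equal to `1` on `B(z, r)` and supported in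
`B̄(z, 2r)`, obtained by rescaling a fixed bump `η₁`, one has `∫ |∇η|² = r^(n-1) ∫ |∇η₁|²`.
-/

open InnerProductSpace Module

section Support

variable {X : Type*} [TopologicalSpace X]

lemma tsupport_fun_pow {M₀ : Type*} [MonoidWithZero M₀] [IsReduced M₀] {f : X → M₀} {n : ℕ}
    (hn : n ≠ 0) : tsupport (fun x => f x ^ n) = tsupport f := by
  rw [tsupport, Function.support_pow _ hn, tsupport]

variable [MeasurableSpace X] [OpensMeasurableSpace X] {μ : Measure X}
  [IsFiniteMeasureOnCompacts μ] {φ f : X → ℝ} {Ω : Set X}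

lemma integrable_mul_of_tsupport_subset (hΩ : IsOpen Ω) (hφ : Continuous φ)
    (hφc : HasCompactSupport φ) (hf : ContinuousOn f Ω) (hφΩ : tsupport φ ⊆ Ω) :
    Integrable (fun x => φ x * f x) μ :=
  ((hφ.continuousOn.mul hf).continuous_of_tsupport_subset hΩ
    (tsupport_mul_subset_left.trans hφΩ)).integrable_of_hasCompactSupport hφc.mul_right

lemma integrable_sq_mul_of_tsupport_subset (hΩ : IsOpen Ω) (hφ : Continuous φ)
    (hφc : HasCompactSupport φ) (hf : ContinuousOn f Ω) (hφΩ : tsupport φ ⊆ Ω) :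
    Integrable (fun x => φ x ^ 2 * f x) μ :=
  integrable_mul_of_tsupport_subset hΩ (hφ.pow 2)
    (hφc.comp_left (g := fun t : ℝ => t ^ 2) (zero_pow two_ne_zero)) hf
    ((tsupport_fun_pow two_ne_zero).trans_subset hφΩ)

end Support

lemma OrthonormalBasis.sum_apply_mul_apply {ι E : Type*} [Fintype ι] [NormedAddCommGroup E]
    [InnerProductSpace ℝ E] [CompleteSpace E] (b : OrthonormalBasis ι ℝ E) (L L' : E →L[ℝ] ℝ) :
    ∑ i, L (b i) * L' (b i) = L' ((toDual ℝ E).symm L) := by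
  rw [← toDual_symm_apply, ← b.sum_inner_mul_inner]
  refine Finset.sum_congr rfl fun i _ => ?_
  rw [toDual_symm_apply, real_inner_comm, toDual_symm_apply, mul_comm]

section EuclideanCoordinates

variable {ι : Type*} [Fintype ι] [DecidableEq ι]

lemma sum_fderiv_single_mul_fderiv_single (u φ : EuclideanSpace ℝ ι → ℝ)
    (x : EuclideanSpace ℝ ι) :
    ∑ i, fderiv ℝ u x (EuclideanSpace.single i 1) * fderiv ℝ φ x (EuclideanSpace.single i 1) =
      fderiv ℝ φ x (gradient u x) := by
  have h := (EuclideanSpace.basisFun ι ℝ).sum_apply_mul_apply (fderiv ℝ u x) (fderiv ℝ φ x)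
  simp only [EuclideanSpace.basisFun_apply] at h
  exact h

lemma norm_gradient_sq_eq_sum (u : EuclideanSpace ℝ ι → ℝ) (x : EuclideanSpace ℝ ι) :
    ‖gradient u x‖ ^ 2 = ∑ i, fderiv ℝ u x (EuclideanSpace.single i 1) ^ 2 := by
  rw [← real_inner_self_eq_norm_sq]
  simp only [sq, sum_fderiv_single_mul_fderiv_single]
  exact toDual_symm_apply

end EuclideanCoordinates

section Regularity

variable {E : Type*} [NormedAddCommGroup E] [NormedSpace ℝ E] {Ω : Set E} {u : E → ℝ}

lemma ContDiffOn.contDiffOn_fderiv_apply (hu : ContDiffOn ℝ 2 u Ω) (hΩ : IsOpen Ω) (v : E) :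
    ContDiffOn ℝ 1 (fun y => fderiv ℝ u y v) Ω :=
  (hu.fderiv_of_isOpen hΩ (by norm_num)).clm_apply contDiffOn_const

lemma ContDiffOn.contDiffOn_mul_fderiv_apply (hu : ContDiffOn ℝ 2 u Ω) (hΩ : IsOpen Ω) (v : E) :
    ContDiffOn ℝ 1 (fun y => u y * fderiv ℝ u y v) Ω :=
  (hu.of_le (by norm_num)).mul (hu.contDiffOn_fderiv_apply hΩ v)

lemma ContDiffOn.continuousOn_gradient {F : Type*} [NormedAddCommGroup F]
    [InnerProductSpace ℝ F] [CompleteSpace F] {Ω : Set F} {u : F → ℝ}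
    (hu : ContDiffOn ℝ 1 u Ω) (hΩ : IsOpen Ω) : ContinuousOn (gradient u) Ω :=
  (toDual ℝ F).symm.continuous.comp_continuousOn (hu.continuousOn_fderiv_of_isOpen hΩ le_rfl)

lemma ContDiffOn.continuousOn_lap {m : ℕ} {Ω : Set (EuclideanSpace ℝ (Fin m))}
    {u : EuclideanSpace ℝ (Fin m) → ℝ} (hu : ContDiffOn ℝ 2 u Ω) (hΩ : IsOpen Ω) :
    ContinuousOn (lap u) Ω :=
  continuousOn_finsetSum _ fun _ _ =>
    ((hu.contDiffOn_fderiv_apply hΩ _).continuousOn_fderiv_of_isOpen hΩ le_rfl).clm_apply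
      continuousOn_const

end Regularity

lemma caccioppoli_pointwise_bound {θ M e w Δ p s k : ℝ} (hθ : θ < 1) (hw : |w| ≤ M)
    (hΔ : -(θ * s ^ 2) ≤ w * Δ) (hp : |p| ≤ k * s) :
    (1 - θ) / 2 * (e ^ 2 * s ^ 2) - 2 / (1 - θ) * M ^ 2 * k ^ 2 ≤
      e ^ 2 * (s ^ 2 + w * Δ) + 2 * e * w * p := by
  have hlap : -(θ * (e ^ 2 * s ^ 2)) ≤ e ^ 2 * (w * Δ) := by nlinarith [sq_nonneg e]
  have hcross : -(2 * e * w * p) ≤ 2 * (|e| * s) * (M * k) := by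
    have hwp : |w| * |p| ≤ M * (k * s) :=
      mul_le_mul hw hp (abs_nonneg p) ((abs_nonneg w).trans hw)
    have := neg_abs_le (2 * e * w * p)
    rw [abs_mul, abs_mul, abs_mul, abs_two] at this
    nlinarith [abs_nonneg e]
  have hyoung := two_mul_le_add_mul_sq (a := |e| * s) (b := M * k) (half_pos (sub_pos.2 hθ))
  rw [inv_div, mul_pow, sq_abs] at hyoung
  nlinarith

section Caccioppoli

variable {m : ℕ} {Ω : Set (EuclideanSpace ℝ (Fin m))} {u η : EuclideanSpace ℝ (Fin m) → ℝ}

lemma fderiv_mul_fderiv_single_apply_single (hu : ContDiffOn ℝ 2 u Ω) (hΩ : IsOpen Ω)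
    {x : EuclideanSpace ℝ (Fin m)} (hx : x ∈ Ω) (i : Fin m) :
    fderiv ℝ (fun y => u y * fderiv ℝ u y (EuclideanSpace.single i 1)) x
        (EuclideanSpace.single i 1) =
      fderiv ℝ u x (EuclideanSpace.single i 1) ^ 2 +
        u x * fderiv ℝ (fun y => fderiv ℝ u y (EuclideanSpace.single i 1)) x
          (EuclideanSpace.single i 1) := by
  have hx' := hΩ.mem_nhds hx
  rw [fderiv_fun_mul ((hu.differentiableOn (by norm_num)).differentiableAt hx')
    (((hu.contDiffOn_fderiv_apply hΩ _).differentiableOn one_ne_zero).differentiableAt hx')]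
  simp only [add_apply, smul_apply, smul_eq_mul]
  ring

lemma sq_mul_norm_gradient_sq_add_mul_lap_eq_sum (hu : ContDiffOn ℝ 2 u Ω) (hΩ : IsOpen Ω)
    (hηΩ : tsupport η ⊆ Ω) (x : EuclideanSpace ℝ (Fin m)) :
    η x ^ 2 * (‖gradient u x‖ ^ 2 + u x * lap u x) =
      ∑ i, η x ^ 2 * fderiv ℝ (fun y => u y * fderiv ℝ u y (EuclideanSpace.single i 1)) x
        (EuclideanSpace.single i 1) := by
  by_cases hx : x ∈ Ω
  · simp only [fderiv_mul_fderiv_single_apply_single hu hΩ hx, ← Finset.mul_sum,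
      Finset.sum_add_distrib, norm_gradient_sq_eq_sum, lap]
  · simp [image_eq_zero_of_notMem_tsupport fun h => hx (hηΩ h)]

lemma sum_fderiv_sq_single_mul {x : EuclideanSpace ℝ (Fin m)} (hη : DifferentiableAt ℝ η x) :
    ∑ i, fderiv ℝ (fun x => η x ^ 2) x (EuclideanSpace.single i 1) *
        (u x * fderiv ℝ u x (EuclideanSpace.single i 1)) =
      2 * η x * u x * fderiv ℝ η x (gradient u x) := by
  rw [fderiv_fun_pow 2 hη, ← sum_fderiv_single_mul_fderiv_single, Finset.mul_sum]
  refine Finset.sum_congr rfl fun i _ => ?_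
  simp only [smul_apply, smul_eq_mul]
  ring

theorem integral_sq_mul_norm_gradient_sq_add_mul_lap (hΩ : IsOpen Ω) (hu : ContDiffOn ℝ 2 u Ω)
    (hη : ContDiff ℝ 1 η) (hηc : HasCompactSupport η) (hηΩ : tsupport η ⊆ Ω) :
    ∫ x, η x ^ 2 * (‖gradient u x‖ ^ 2 + u x * lap u x) =
      -∫ x, 2 * η x * u x * fderiv ℝ η x (gradient u x) := by
  set e : Fin m → EuclideanSpace ℝ (Fin m) := fun i => EuclideanSpace.single i 1
  set g : Fin m → EuclideanSpace ℝ (Fin m) → ℝ := fun i y => u y * fderiv ℝ u y (e i)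
  have hη2 : ContDiff ℝ 1 fun x => η x ^ 2 := hη.pow 2
  have hη2Ω : tsupport (fun x => η x ^ 2) ⊆ Ω := (tsupport_fun_pow two_ne_zero).trans_subset hηΩ
  have hg : ∀ i, ContDiffOn ℝ 1 (g i) Ω := fun i => hu.contDiffOn_mul_fderiv_apply hΩ (e i)
  have hint : ∀ i, Integrable fun x => η x ^ 2 * fderiv ℝ (g i) x (e i) := fun i =>
    integrable_sq_mul_of_tsupport_subset hΩ hη.continuous hηc
      (((hg i).continuousOn_fderiv_of_isOpen hΩ le_rfl).clm_apply continuousOn_const) hηΩ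
  have hint' : ∀ i, Integrable fun x => fderiv ℝ (fun x => η x ^ 2) x (e i) * g i x := fun i =>
    integrable_mul_of_tsupport_subset hΩ
      ((hη2.continuous_fderiv one_ne_zero).clm_apply continuous_const)
      ((hηc.comp_left (g := fun t : ℝ => t ^ 2) (zero_pow two_ne_zero)).fderiv_apply ℝ (e i))
      (hg i).continuousOn ((tsupport_fderiv_apply_subset ℝ (e i)).trans hη2Ω)
  have hibp : ∀ i, ∫ x, η x ^ 2 * fderiv ℝ (g i) x (e i) =
      -∫ x, fderiv ℝ (fun x => η x ^ 2) x (e i) * g i x := fun i =>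
    integral_mul_fderiv_eq_neg_fderiv_mul_of_integrable (hint' i) (hint i)
      (integrable_sq_mul_of_tsupport_subset hΩ hη.continuous hηc (hg i).continuousOn hηΩ)
      (fun x _ => (hη2.differentiable one_ne_zero) x)
      (fun x hx => ((hg i).differentiableOn one_ne_zero).differentiableAt (hΩ.mem_nhds (hη2Ω hx)))
  calc ∫ x, η x ^ 2 * (‖gradient u x‖ ^ 2 + u x * lap u x)
      = ∑ i, ∫ x, η x ^ 2 * fderiv ℝ (g i) x (e i) := by
        simp only [sq_mul_norm_gradient_sq_add_mul_lap_eq_sum hu hΩ hηΩ]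
        exact integral_finsetSum _ fun i _ => hint i
    _ = -∑ i, ∫ x, fderiv ℝ (fun x => η x ^ 2) x (e i) * g i x := by
        simp only [hibp, Finset.sum_neg_distrib]
    _ = -∫ x, 2 * η x * u x * fderiv ℝ η x (gradient u x) := by
        simp only [← sum_fderiv_sq_single_mul ((hη.differentiable one_ne_zero) _)]
        rw [integral_finsetSum _ fun i _ => hint' i]

lemma caccioppoli_integrand_bound {θ M : ℝ} (hθ : θ < 1) (hM : ∀ x ∈ Ω, |u x| ≤ M)
    (hsub : ∀ x ∈ Ω, -(θ * ‖gradient u x‖ ^ 2) ≤ u x * lap u x) (hηΩ : tsupport η ⊆ Ω)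
    (x : EuclideanSpace ℝ (Fin m)) :
    (1 - θ) / 2 * (η x ^ 2 * ‖gradient u x‖ ^ 2) - 2 / (1 - θ) * M ^ 2 * ‖fderiv ℝ η x‖ ^ 2 ≤
      η x ^ 2 * (‖gradient u x‖ ^ 2 + u x * lap u x) +
        2 * η x * u x * fderiv ℝ η x (gradient u x) := by
  by_cases hx : x ∈ Ω
  · exact caccioppoli_pointwise_bound hθ (hM x hx) (hsub x hx)
      (by simpa only [Real.norm_eq_abs] using (fderiv ℝ η x).le_opNorm (gradient u x))
  · have hx' : x ∉ tsupport η := fun h => hx (hηΩ h)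
    simp [image_eq_zero_of_notMem_tsupport hx', fderiv_of_notMem_tsupport ℝ hx']

theorem integral_sq_mul_norm_gradient_sq_le (hΩ : IsOpen Ω) (hu : ContDiffOn ℝ 2 u Ω)
    {θ M : ℝ} (hθ : θ < 1) (hM : ∀ x ∈ Ω, |u x| ≤ M)
    (hsub : ∀ x ∈ Ω, -(θ * ‖gradient u x‖ ^ 2) ≤ u x * lap u x)
    (hη : ContDiff ℝ 1 η) (hηc : HasCompactSupport η) (hηΩ : tsupport η ⊆ Ω) :
    ∫ x, η x ^ 2 * ‖gradient u x‖ ^ 2 ≤ 4 * M ^ 2 / (1 - θ) ^ 2 * ∫ x, ‖fderiv ℝ η x‖ ^ 2 := by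
  have hgrad := (hu.of_le one_le_two).continuousOn_gradient hΩ
  have hDη := hη.continuous_fderiv one_ne_zero
  have hI : Integrable fun x => η x ^ 2 * ‖gradient u x‖ ^ 2 :=
    integrable_sq_mul_of_tsupport_subset hΩ hη.continuous hηc (hgrad.norm.pow 2) hηΩ
  have hJc : HasCompactSupport fun x => ‖fderiv ℝ η x‖ ^ 2 :=
    (hηc.fderiv ℝ).norm.comp_left (g := fun t : ℝ => t ^ 2) (zero_pow two_ne_zero)
  have hJ : Integrable fun x => ‖fderiv ℝ η x‖ ^ 2 :=
    (hDη.norm.pow 2).integrable_of_hasCompactSupport hJc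
  have hdiv : Integrable fun x => η x ^ 2 * (‖gradient u x‖ ^ 2 + u x * lap u x) :=
    integrable_sq_mul_of_tsupport_subset hΩ hη.continuous hηc
      ((hgrad.norm.pow 2).add (hu.continuousOn.mul (hu.continuousOn_lap hΩ))) hηΩ
  have hcross : Integrable fun x => 2 * η x * u x * fderiv ℝ η x (gradient u x) := by
    simpa only [mul_assoc] using (integrable_mul_of_tsupport_subset hΩ hη.continuous hηc
      (f := fun x => u x * fderiv ℝ η x (gradient u x))
      (hu.continuousOn.mul (hDη.continuousOn.clm_apply hgrad)) hηΩ).const_mul 2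
  have key : ∫ x, ((1 - θ) / 2 * (η x ^ 2 * ‖gradient u x‖ ^ 2)
      - 2 / (1 - θ) * M ^ 2 * ‖fderiv ℝ η x‖ ^ 2) ≤
      ∫ x, (η x ^ 2 * (‖gradient u x‖ ^ 2 + u x * lap u x) +
        2 * η x * u x * fderiv ℝ η x (gradient u x)) :=
    integral_mono ((hI.const_mul _).sub (hJ.const_mul _)) (hdiv.add hcross)
      (caccioppoli_integrand_bound hθ hM hsub hηΩ)
  rw [integral_add hdiv hcross, integral_sq_mul_norm_gradient_sq_add_mul_lap hΩ hu hη hηc hηΩ,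
    neg_add_cancel, integral_sub (hI.const_mul _) (hJ.const_mul _), integral_const_mul,
    integral_const_mul, sub_nonpos] at key
  have hθ' : 0 < 1 - θ := sub_pos.2 hθ
  calc ∫ x, η x ^ 2 * ‖gradient u x‖ ^ 2
      = 2 / (1 - θ) * ((1 - θ) / 2 * ∫ x, η x ^ 2 * ‖gradient u x‖ ^ 2) := by
        field_simp
    _ ≤ 2 / (1 - θ) * (2 / (1 - θ) * M ^ 2 * ∫ x, ‖fderiv ℝ η x‖ ^ 2) := by gcongr
    _ = 4 * M ^ 2 / (1 - θ) ^ 2 * ∫ x, ‖fderiv ℝ η x‖ ^ 2 := by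
        field_simp
        ring

end Caccioppoli

section Rescaling

variable {E : Type*} [NormedAddCommGroup E] [NormedSpace ℝ E]

lemma fderiv_comp_smul_sub {φ : E → ℝ} (hφ : Differentiable ℝ φ) (c : ℝ) (z x : E) :
    fderiv ℝ (fun x => φ (c • (x - z))) x = c • fderiv ℝ φ (c • (x - z)) := by
  have hA : HasFDerivAt (fun x : E => c • (x - z)) (c • ContinuousLinearMap.id ℝ E) x :=
    ((hasFDerivAt_id x).sub_const z).const_smul c
  have h : HasFDerivAt (fun x => φ (c • (x - z)))
      ((fderiv ℝ φ (c • (x - z))).comp (c • ContinuousLinearMap.id ℝ E)) x :=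
    (hφ _).hasFDerivAt.comp x hA
  rw [h.fderiv, ContinuousLinearMap.comp_smul, ContinuousLinearMap.comp_id]

lemma integral_norm_fderiv_comp_inv_smul_sub_sq [FiniteDimensional ℝ E] [MeasurableSpace E]
    [BorelSpace E] (μ : Measure E) [μ.IsAddHaarMeasure] {φ : E → ℝ} (hφ : Differentiable ℝ φ)
    (z : E) {r : ℝ} (hr : 0 < r) :
    ∫ x, ‖fderiv ℝ (fun x => φ (r⁻¹ • (x - z))) x‖ ^ 2 ∂μ =
      r ^ finrank ℝ E / r ^ 2 * ∫ x, ‖fderiv ℝ φ x‖ ^ 2 ∂μ := by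
  simp_rw [fderiv_comp_smul_sub hφ, norm_smul, mul_pow]
  rw [integral_const_mul, integral_sub_right_eq_self (fun x => ‖fderiv ℝ φ (r⁻¹ • x)‖ ^ 2) z,
    μ.integral_comp_inv_smul_of_nonneg (fun x => ‖fderiv ℝ φ x‖ ^ 2) hr.le, smul_eq_mul,
    Real.norm_eq_abs, abs_of_pos (inv_pos.2 hr)]
  field_simp

variable [HasContDiffBump E]

def ContDiffBump.rescale (f : ContDiffBump (0 : E)) (z : E) {r : ℝ} (hr : 0 < r) :
    ContDiffBump z where
  rIn := r * f.rIn
  rOut := r * f.rOut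
  rIn_pos := mul_pos hr f.rIn_pos
  rIn_lt_rOut := mul_lt_mul_of_pos_left f.rIn_lt_rOut hr

lemma ContDiffBump.coe_rescale (f : ContDiffBump (0 : E)) (z : E) {r : ℝ} (hr : 0 < r) :
    ⇑(f.rescale z hr) = fun x => f (r⁻¹ • (x - z)) := by
  ext x
  simp only [ContDiffBump.apply, rescale, mul_div_mul_left _ _ hr.ne', sub_zero, smul_smul,
    mul_inv, mul_comm]

noncomputable def unitCutoff (E : Type*) [NormedAddCommGroup E] [NormedSpace ℝ E]
    [HasContDiffBump E] : ContDiffBump (0 : E) :=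
  ⟨1, 2, one_pos, one_lt_two⟩

end Rescaling

theorem setIntegral_ball_norm_gradient_sq_le {m : ℕ} {Ω : Set (EuclideanSpace ℝ (Fin m))}
    {u : EuclideanSpace ℝ (Fin m) → ℝ} (hΩ : IsOpen Ω) (hu : ContDiffOn ℝ 2 u Ω)
    {θ M : ℝ} (hθ : θ < 1) (hM : ∀ x ∈ Ω, |u x| ≤ M)
    (hsub : ∀ x ∈ Ω, -(θ * ‖gradient u x‖ ^ 2) ≤ u x * lap u x)
    {z : EuclideanSpace ℝ (Fin m)} {r : ℝ} (hr : 0 < r) (hball : closedBall z (2 * r) ⊆ Ω) :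
    ∫ x in ball z r, ‖gradient u x‖ ^ 2 ≤
      4 / (1 - θ) ^ 2 * (∫ x, ‖fderiv ℝ (unitCutoff (EuclideanSpace ℝ (Fin m))) x‖ ^ 2) *
        (r ^ m / r ^ 2) * M ^ 2 := by
  set η := (unitCutoff (EuclideanSpace ℝ (Fin m))).rescale z hr
  have hηΩ : tsupport η ⊆ Ω := by
    rw [η.tsupport_eq]
    simpa [η, ContDiffBump.rescale, unitCutoff, mul_comm] using hball
  have hη_one : ∀ x ∈ ball z r, η x = 1 := by
    intro x hx
    refine η.one_of_mem_closedBall ?_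
    simpa [η, ContDiffBump.rescale, unitCutoff] using ball_subset_closedBall hx
  calc ∫ x in ball z r, ‖gradient u x‖ ^ 2
      = ∫ x in ball z r, η x ^ 2 * ‖gradient u x‖ ^ 2 :=
        setIntegral_congr_fun measurableSet_ball fun x hx => by simp [hη_one x hx]
    _ ≤ ∫ x, η x ^ 2 * ‖gradient u x‖ ^ 2 :=
        setIntegral_le_integral (integrable_sq_mul_of_tsupport_subset hΩ η.continuous
          η.hasCompactSupport (((hu.of_le one_le_two).continuousOn_gradient hΩ).norm.pow 2) hηΩ)
          (Filter.Eventually.of_forall fun x => by positivity)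
    _ ≤ 4 * M ^ 2 / (1 - θ) ^ 2 * ∫ x, ‖fderiv ℝ η x‖ ^ 2 :=
        integral_sq_mul_norm_gradient_sq_le hΩ hu hθ hM hsub η.contDiff η.hasCompactSupport hηΩ
    _ = 4 / (1 - θ) ^ 2 * (∫ x, ‖fderiv ℝ (unitCutoff (EuclideanSpace ℝ (Fin m))) x‖ ^ 2) *
          (r ^ m / r ^ 2) * M ^ 2 := by
        rw [show ⇑η = _ from ContDiffBump.coe_rescale _ z hr,
          integral_norm_fderiv_comp_inv_smul_sub_sq volume
            ((ContDiffBump.contDiff (n := 1) _).differentiable one_ne_zero) z hr,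
          finrank_euclideanSpace_fin]
        ring

theorem stmt15_general {n : ℕ} (Ω : Set (EuclideanSpace ℝ (Fin (n + 1)))) (hΩ : IsOpen Ω)
    (u : EuclideanSpace ℝ (Fin (n + 1)) → ℝ) (hu : ContDiffOn ℝ 2 u Ω)
    (θ : ℝ) (hθ1 : θ < 1)
    (M : ℝ) (hM : ∀ x ∈ Ω, |u x| ≤ M)
    (hcond : ∀ x ∈ Ω, |u x * lap u x| ≤ θ * ‖gradient u x‖ ^ 2) :
    ∃ C > 0, ∀ (z : EuclideanSpace ℝ (Fin (n + 1))) (r : ℝ), 0 < r →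
      closedBall z (2 * r) ⊆ Ω →
      (∫ w in ball z r, ‖gradient u w‖ ^ 2) ≤ C * r ^ ((n : ℝ) - 1) * M ^ 2 ∧
      ⨍ w in ball z r, ‖gradient u w‖ ^ 2 ≤ C * M ^ 2 / r ^ 2 := by
  set A := 4 / (1 - θ) ^ 2 * ∫ x, ‖fderiv ℝ (unitCutoff (EuclideanSpace ℝ (Fin (n + 1)))) x‖ ^ 2
  set ω := volume.real (ball (0 : EuclideanSpace ℝ (Fin (n + 1))) 1)
  have hA : 0 ≤ A := by positivity
  have hω : 0 < ω :=
    ENNReal.toReal_pos (measure_ball_pos volume _ one_pos).ne' measure_ball_lt_top.ne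
  refine ⟨A * (1 + ω⁻¹) + 1, by positivity, fun z r hr hball => ?_⟩
  have hI := setIntegral_ball_norm_gradient_sq_le hΩ hu hθ1 hM
    (fun x hx => neg_le_of_abs_le (hcond x hx)) hr hball
  have hpow : r ^ ((n : ℝ) - 1) = r ^ (n + 1) / r ^ 2 := by
    rw [show (n : ℝ) - 1 = ((n + 1 : ℕ) : ℝ) - (2 : ℕ) by push_cast; ring, Real.rpow_sub hr,
      Real.rpow_natCast, Real.rpow_natCast]
  have hvol : volume.real (ball z r) = r ^ (n + 1) * ω := by
    rw [measureReal_def, Measure.addHaar_ball_of_pos volume z hr, ENNReal.toReal_mul,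
      ENNReal.toReal_ofReal (by positivity), finrank_euclideanSpace_fin]
    rfl
  have hAC : A ≤ A * (1 + ω⁻¹) + 1 := by nlinarith [inv_pos.2 hω]
  have hAωC : A * ω⁻¹ ≤ A * (1 + ω⁻¹) + 1 := by nlinarith
  constructor
  · rw [hpow]
    exact hI.trans (by gcongr)
  · rw [setAverage_eq, smul_eq_mul, hvol]
    calc (r ^ (n + 1) * ω)⁻¹ * ∫ x in ball z r, ‖gradient u x‖ ^ 2
        ≤ (r ^ (n + 1) * ω)⁻¹ * (A * (r ^ (n + 1) / r ^ 2) * M ^ 2) := by gcongr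
      _ = A * ω⁻¹ * M ^ 2 / r ^ 2 := by field_simp
      _ ≤ (A * (1 + ω⁻¹) + 1) * M ^ 2 / r ^ 2 := by gcongr

theorem stmt15 {n : ℕ} (Ω : Set (EuclideanSpace ℝ (Fin (n + 1)))) (hΩ : IsOpen Ω)
    (u : EuclideanSpace ℝ (Fin (n + 1)) → ℝ) (hu : ContDiffOn ℝ 2 u Ω)
    (θ : ℝ) (hθ0 : 0 < θ) (hθ1 : θ < 1)
    (M : ℝ) (hM : ∀ x ∈ Ω, |u x| ≤ M)
    (hcond : ∀ x ∈ Ω, |u x * lap u x| ≤ θ * ‖gradient u x‖ ^ 2) :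
    ∃ C > 0, ∀ (z : EuclideanSpace ℝ (Fin (n + 1))) (r : ℝ), 0 < r →
      closedBall z (2 * r) ⊆ Ω →
      (∫ w in ball z r, ‖gradient u w‖ ^ 2) ≤ C * r ^ ((n : ℝ) - 1) * M ^ 2 ∧
      ⨍ w in ball z r, ‖gradient u w‖ ^ 2 ≤ C * M ^ 2 / r ^ 2 :=
  stmt15_general Ω hΩ u hu θ hθ1 M hM hcond
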